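/- Let H be a simple bipartite matching covered graph and let b be a vertex of H of degree at least three. If e and f are two distinct edges incident with b that both lie in a common 4-cycle of H, then at least one of e and f is removable in H. -/

import Mathlib

/-! Preamble: definitions for matching covered graphs, bricks, removable
doubletons, R-compatible/R-thin edges, retracts, ladders, partial biwheels,
R-configurations, and the eleven infinite families. -/

/-- The graph has a perfect matching. -/
def HasPerfMatching {V : Type*} (G : SimpleGraph V) : Prop :=
  ∃ M : G.Subgraph, M.IsPerfectMatching

/-- A graph (with at least two vertices) is matching covered if it is connected
and each of its edges lies in some perfect matching. -/
def MatchingCovered {V : Type*} (G : SimpleGraph V) : Prop :=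
  2 ≤ Nat.card V ∧ G.Connected ∧
    ∀ e ∈ G.edgeSet, ∃ M : G.Subgraph, M.IsPerfectMatching ∧ e ∈ M.edgeSet

/-- An edge of a matching covered graph is removable if deleting it leaves a
matching covered graph. -/
def RemovableEdge {V : Type*} (G : SimpleGraph V) (e : Sym2 V) : Prop :=
  e ∈ G.edgeSet ∧ MatchingCovered (G.deleteEdges {e})

/-- The number of odd connected components. -/
noncomputable def oddCompCount {V : Type*} (G : SimpleGraph V) : ℕ :=
  Nat.card {c : G.ConnectedComponent // Odd (Nat.card c.supp)}

/-- `S` is a barrier of `G`: `S` is nonempty and the number of odd components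
of `G − S` equals `|S|`. -/
def IsBarrierOf {V : Type*} (G : SimpleGraph V) (S : Set V) : Prop :=
  S.Nonempty ∧ oddCompCount (G.induce (Sᶜ : Set V)) = S.ncard

/-- Bicritical: at least four vertices, and deleting any two distinct vertices
leaves a graph with a perfect matching. -/
def BicriticalGraph {V : Type*} (G : SimpleGraph V) : Prop :=
  4 ≤ Nat.card V ∧ ∀ u v : V, u ≠ v →
    HasPerfMatching (G.induce (({u, v} : Set V)ᶜ))

/-- 3-connected: at least four vertices, and deleting any set of at most two
vertices leaves a connected graph. -/
def ThreeConnectedGraph {V : Type*} (G : SimpleGraph V) : Prop :=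
  4 ≤ Nat.card V ∧ ∀ S : Set V, S.ncard ≤ 2 → (G.induce (Sᶜ : Set V)).Connected

/-- A brick is a 3-connected bicritical graph. -/
def BrickGraph {V : Type*} (G : SimpleGraph V) : Prop :=
  ThreeConnectedGraph G ∧ BicriticalGraph G

/-- `A`, `B` form a bipartition of `G`. -/
def BipartitionOf {V : Type*} (G : SimpleGraph V) (A B : Set V) : Prop :=
  A ∪ B = Set.univ ∧ Disjoint A B ∧ ∀ ⦃u v : V⦄, G.Adj u v → (u ∈ A ↔ v ∈ B)

/-- `G` is bipartite. -/
def BipartiteGraph {V : Type*} (G : SimpleGraph V) : Prop :=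
  ∃ A B : Set V, BipartitionOf G A B

/-- `{α, β}` is a removable doubleton of `G`: a pair of distinct edges whose
deletion leaves a bipartite matching covered graph. -/
def RemovableDoubleton {V : Type*} (G : SimpleGraph V) (α β : Sym2 V) : Prop :=
  α ≠ β ∧ α ∈ G.edgeSet ∧ β ∈ G.edgeSet ∧
    BipartiteGraph (G.deleteEdges {α, β}) ∧ MatchingCovered (G.deleteEdges {α, β})

/-- An `R`-brick: a brick with a fixed removable doubleton `R = {α, β}`. -/
def RBrick {V : Type*} (G : SimpleGraph V) (α β : Sym2 V) : Prop :=
  BrickGraph G ∧ RemovableDoubleton G α β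

/-- `V(R)`: the set of the four ends of the doubleton edges. -/
def VR {V : Type*} (α β : Sym2 V) : Set V := {v | v ∈ α ∨ v ∈ β}

/-- `e` is `R`-compatible: it is an edge of `H := G − R` and is removable in
both `G` and `H`. -/
def RCompatible {V : Type*} (G : SimpleGraph V) (α β e : Sym2 V) : Prop :=
  e ∈ (G.deleteEdges {α, β}).edgeSet ∧
    MatchingCovered (G.deleteEdges {e}) ∧
    MatchingCovered ((G.deleteEdges {α, β}).deleteEdges {e})

/-- `e` is `R`-thin: `R`-compatible, and every barrier of `G − e` has at most
two vertices. -/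
def RThin {V : Type*} (G : SimpleGraph V) (α β e : Sym2 V) : Prop :=
  RCompatible G α β e ∧
    ∀ S : Set V, IsBarrierOf (G.deleteEdges {e}) S → S.ncard ≤ 2

/-- The number of maximal nontrivial barriers of a graph. -/
noncomputable def barrierIndex {V : Type*} (G : SimpleGraph V) : ℕ :=
  Set.ncard {S : Set V | IsBarrierOf G S ∧ 2 ≤ S.ncard ∧
    ∀ T : Set V, IsBarrierOf G T → S ⊆ T → T = S}

/-- Degree of a vertex (as the cardinality of its neighbourhood). -/
noncomputable def degOf {V : Type*} (G : SimpleGraph V) (v : V) : ℕ :=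
  (G.neighborSet v).ncard

/-- The relation identifying each degree-two vertex with its neighbours
(bicontraction of all degree-two vertices at once). -/
def bicontractPairRel {V : Type*} (G : SimpleGraph V) (u v : V) : Prop :=
  G.Adj u v ∧ (degOf G u = 2 ∨ degOf G v = 2)

/-- The vertex identifications performed when taking the retract. -/
def retractSetoid {V : Type*} (G : SimpleGraph V) : Setoid V :=
  Relation.EqvGen.setoid (bicontractPairRel G)

/-- The retract of `G` (as a simple graph on the quotient). -/
def retractGraph {V : Type*} (G : SimpleGraph V) :
    SimpleGraph (Quotient (retractSetoid G)) where
  Adj X Y := X ≠ Y ∧ ∃ u v : V,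
    Quotient.mk (retractSetoid G) u = X ∧ Quotient.mk (retractSetoid G) v = Y ∧ G.Adj u v
  symm := by
    constructor
    rintro X Y ⟨hne, u, v, hu, hv, huv⟩
    exact ⟨hne.symm, v, u, hv, hu, huv.symm⟩
  loopless := by
    constructor
    rintro X ⟨hne, -⟩
    exact hne rfl

/-- The retract of `G` has a pair of parallel edges. -/
def retractHasParallel {V : Type*} (G : SimpleGraph V) : Prop :=
  ∃ p q p' q' : V, G.Adj p q ∧ G.Adj p' q' ∧ s(p, q) ≠ s(p', q') ∧
    ¬ Relation.EqvGen (bicontractPairRel G) p q ∧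
    ((Relation.EqvGen (bicontractPairRel G) p p' ∧
        Relation.EqvGen (bicontractPairRel G) q q') ∨
     (Relation.EqvGen (bicontractPairRel G) p q' ∧
        Relation.EqvGen (bicontractPairRel G) q p'))

/-- `e` is strictly `R`-thin: `R`-thin and the retract of `G − e` has no
parallel edges. -/
def StrictlyRThin {V : Type*} (G : SimpleGraph V) (α β e : Sym2 V) : Prop :=
  RThin G α β e ∧ ¬ retractHasParallel (G.deleteEdges {e})

/-- The ladder with `m` rungs: two paths `x₀…x_{m-1}` (first coordinate `0`)
and `y₀…y_{m-1}` (first coordinate `1`) together with the rungs `xᵢyᵢ`. -/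
def ladderGraph (m : ℕ) : SimpleGraph (Fin 2 × Fin m) :=
  SimpleGraph.fromRel (fun p q =>
    (p.1 = q.1 ∧ p.2.val + 1 = q.2.val) ∨ (p.1 ≠ q.1 ∧ p.2 = q.2))

/-- The partial biwheel on the odd path `x₀…x_{2k-1}` (the `inl` vertices)
with hubs `u = inr 0` (joined to the even-indexed path vertices) and
`w = inr 1` (joined to the odd-indexed path vertices). -/
def biwheelGraph (k : ℕ) : SimpleGraph (Fin (2 * k) ⊕ Fin 2) :=
  SimpleGraph.fromRel (fun p q =>
    match p, q with
    | Sum.inl i, Sum.inl j => i.val + 1 = j.val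
    | Sum.inr h, Sum.inl i => (h = 0 ∧ i.val % 2 = 0) ∨ (h = 1 ∧ i.val % 2 = 1)
    | _, _ => False)

/-- The subgraph `K` of `Γ` is a ladder with `m` rungs and corners `a u b w`:
`au` and `bw` are its external rungs, labelled according to the convention
that `a` and `w` lie in one colour class and `b` and `u` in the other. -/
def LadderOn {W : Type*} (Γ : SimpleGraph W) (K : Γ.Subgraph) (m : ℕ)
    (a u b w : W) : Prop :=
  ∃ (hm : 3 ≤ m) (φ : ladderGraph m ≃g K.coe),
    (φ ((0 : Fin 2), (⟨0, by omega⟩ : Fin m))).val = a ∧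
    (φ ((1 : Fin 2), (⟨0, by omega⟩ : Fin m))).val = u ∧
    (if m % 2 = 1 then
        (φ ((0 : Fin 2), (⟨m - 1, by omega⟩ : Fin m))).val = w ∧
        (φ ((1 : Fin 2), (⟨m - 1, by omega⟩ : Fin m))).val = b
      else
        (φ ((1 : Fin 2), (⟨m - 1, by omega⟩ : Fin m))).val = w ∧
        (φ ((0 : Fin 2), (⟨m - 1, by omega⟩ : Fin m))).val = b)

/-- The subgraph `K` of `Γ` is a partial biwheel (parameter `k`, order `2k+2`)
with ends `a`, `b` and hubs `u`, `w`; its external spokes are `au` and `bw`. -/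
def BiwheelOn {W : Type*} (Γ : SimpleGraph W) (K : Γ.Subgraph) (k : ℕ)
    (a u b w : W) : Prop :=
  ∃ (hk : 2 ≤ k) (φ : biwheelGraph k ≃g K.coe),
    (φ (Sum.inl (⟨0, by omega⟩ : Fin (2 * k)))).val = a ∧
    (φ (Sum.inl (⟨2 * k - 1, by omega⟩ : Fin (2 * k)))).val = b ∧
    (φ (Sum.inr 0)).val = u ∧
    (φ (Sum.inr 1)).val = w

/-- Truncated biwheel: a spanning partial biwheel plus the edges `aw`, `bu`. -/
def IsTruncatedBiwheel {V : Type*} (G : SimpleGraph V) : Prop :=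
  ∃ (K : G.Subgraph) (k : ℕ) (a u b w : V),
    BiwheelOn G K k a u b w ∧ K.verts = Set.univ ∧
    G.edgeSet = K.edgeSet ∪ {s(a, w), s(b, u)}

/-- Prism: a spanning odd ladder plus the edges `aw`, `bu`. -/
def IsPrism {V : Type*} (G : SimpleGraph V) : Prop :=
  ∃ (K : G.Subgraph) (m : ℕ) (a u b w : V),
    Odd m ∧ LadderOn G K m a u b w ∧ K.verts = Set.univ ∧
    G.edgeSet = K.edgeSet ∪ {s(a, w), s(b, u)}

/-- Möbius ladder: a spanning even ladder plus the edges `aw`, `bu`;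
by convention `K₄` is also a Möbius ladder. -/
def IsMobiusLadder {V : Type*} (G : SimpleGraph V) : Prop :=
  (∃ (K : G.Subgraph) (m : ℕ) (a u b w : V),
    Even m ∧ LadderOn G K m a u b w ∧ K.verts = Set.univ ∧
    G.edgeSet = K.edgeSet ∪ {s(a, w), s(b, u)}) ∨
  Nonempty (G ≃g (⊤ : SimpleGraph (Fin 4)))

/-- Staircase: a ladder plus two new vertices `a₂`, `b₂` and the five edges
`a a₂`, `u a₂`, `b b₂`, `w b₂`, `a₂ b₂`. -/
def IsStaircase {V : Type*} (G : SimpleGraph V) : Prop :=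
  ∃ (K : G.Subgraph) (m : ℕ) (a u b w a2 b2 : V),
    LadderOn G K m a u b w ∧
    a2 ∉ K.verts ∧ b2 ∉ K.verts ∧ a2 ≠ b2 ∧
    K.verts ∪ {a2, b2} = Set.univ ∧
    G.edgeSet = K.edgeSet ∪ {s(a, a2), s(u, a2), s(b, b2), s(w, b2), s(a2, b2)}

/-- Pseudo-biwheel: a partial biwheel of order at least eight plus two new
vertices `a₂`, `b₂` and the five edges `a a₂`, `u a₂`, `b b₂`, `w b₂`,
`a₂ b₂`. -/
def IsPseudoBiwheel {V : Type*} (G : SimpleGraph V) : Prop :=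
  ∃ (K : G.Subgraph) (k : ℕ) (a u b w a2 b2 : V),
    3 ≤ k ∧ BiwheelOn G K k a u b w ∧
    a2 ∉ K.verts ∧ b2 ∉ K.verts ∧ a2 ≠ b2 ∧
    K.verts ∪ {a2, b2} = Set.univ ∧
    G.edgeSet = K.edgeSet ∪ {s(a, a2), s(u, a2), s(b, b2), s(w, b2), s(a2, b2)}

/-- Double biwheel of type I: two partial biwheels sharing precisely their
hubs `u`, `w`, plus the edges `a₁a₂` and `b₁b₂`. -/
def IsDoubleBiwheelI {V : Type*} (G : SimpleGraph V) : Prop :=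
  ∃ (K1 K2 : G.Subgraph) (k1 k2 : ℕ) (a1 b1 a2 b2 u w : V),
    BiwheelOn G K1 k1 a1 u b1 w ∧ BiwheelOn G K2 k2 a2 u b2 w ∧
    K1.verts ∩ K2.verts = {u, w} ∧ K1.verts ∪ K2.verts = Set.univ ∧
    G.edgeSet = K1.edgeSet ∪ K2.edgeSet ∪ {s(a1, a2), s(b1, b2)}

/-- Double ladder of type I. -/
def IsDoubleLadderI {V : Type*} (G : SimpleGraph V) : Prop :=
  ∃ (K1 K2 : G.Subgraph) (m1 m2 : ℕ) (a1 b1 a2 b2 u w : V),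
    LadderOn G K1 m1 a1 u b1 w ∧ LadderOn G K2 m2 a2 u b2 w ∧
    K1.verts ∩ K2.verts = {u, w} ∧ K1.verts ∪ K2.verts = Set.univ ∧
    G.edgeSet = K1.edgeSet ∪ K2.edgeSet ∪ {s(a1, a2), s(b1, b2)}

/-- Laddered biwheel of type I. -/
def IsLadderedBiwheelI {V : Type*} (G : SimpleGraph V) : Prop :=
  ∃ (K1 K2 : G.Subgraph) (k1 m2 : ℕ) (a1 b1 a2 b2 u w : V),
    BiwheelOn G K1 k1 a1 u b1 w ∧ LadderOn G K2 m2 a2 u b2 w ∧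
    K1.verts ∩ K2.verts = {u, w} ∧ K1.verts ∪ K2.verts = Set.univ ∧
    G.edgeSet = K1.edgeSet ∪ K2.edgeSet ∪ {s(a1, a2), s(b1, b2)}

/-- Double biwheel of type II: two vertex-disjoint partial biwheels of order
at least eight plus the four edges `a₁a₂`, `b₁b₂`, `u₁w₂`, `w₁u₂`. -/
def IsDoubleBiwheelII {V : Type*} (G : SimpleGraph V) : Prop :=
  ∃ (K1 K2 : G.Subgraph) (k1 k2 : ℕ) (a1 u1 b1 w1 a2 u2 b2 w2 : V),
    3 ≤ k1 ∧ 3 ≤ k2 ∧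
    BiwheelOn G K1 k1 a1 u1 b1 w1 ∧ BiwheelOn G K2 k2 a2 u2 b2 w2 ∧
    K1.verts ∩ K2.verts = ∅ ∧ K1.verts ∪ K2.verts = Set.univ ∧
    G.edgeSet = K1.edgeSet ∪ K2.edgeSet ∪
      {s(a1, a2), s(b1, b2), s(u1, w2), s(w1, u2)}

/-- Double ladder of type II. -/
def IsDoubleLadderII {V : Type*} (G : SimpleGraph V) : Prop :=
  ∃ (K1 K2 : G.Subgraph) (m1 m2 : ℕ) (a1 u1 b1 w1 a2 u2 b2 w2 : V),
    LadderOn G K1 m1 a1 u1 b1 w1 ∧ LadderOn G K2 m2 a2 u2 b2 w2 ∧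
    K1.verts ∩ K2.verts = ∅ ∧ K1.verts ∪ K2.verts = Set.univ ∧
    G.edgeSet = K1.edgeSet ∪ K2.edgeSet ∪
      {s(a1, a2), s(b1, b2), s(u1, w2), s(w1, u2)}

/-- Laddered biwheel of type II. -/
def IsLadderedBiwheelII {V : Type*} (G : SimpleGraph V) : Prop :=
  ∃ (K1 K2 : G.Subgraph) (k1 m2 : ℕ) (a1 u1 b1 w1 a2 u2 b2 w2 : V),
    3 ≤ k1 ∧
    BiwheelOn G K1 k1 a1 u1 b1 w1 ∧ LadderOn G K2 m2 a2 u2 b2 w2 ∧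
    K1.verts ∩ K2.verts = ∅ ∧ K1.verts ∪ K2.verts = Set.univ ∧
    G.edgeSet = K1.edgeSet ∪ K2.edgeSet ∪
      {s(a1, a2), s(b1, b2), s(u1, w2), s(w1, u2)}

/-- Membership in one of the eleven infinite families. -/
def InEleven {V : Type*} (G : SimpleGraph V) : Prop :=
  IsTruncatedBiwheel G ∨ IsPrism G ∨ IsMobiusLadder G ∨ IsStaircase G ∨
  IsPseudoBiwheel G ∨ IsDoubleBiwheelI G ∨ IsDoubleLadderI G ∨
  IsLadderedBiwheelI G ∨ IsDoubleBiwheelII G ∨ IsDoubleLadderII G ∨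
  IsLadderedBiwheelII G

/-- An `R`-ladder configuration: a subgraph `K` of `H := G − R` which is a
ladder with external rungs `au` and `bw` (free corners `u`, `w`) such that
every vertex of `K` except possibly `u` and `w` is cubic in `G`, the corners
`a` and `b` lie in `V(R)`, and every internal rung is an `R`-thin edge of `G`
whose index is two. -/
def RLadderConfig {V : Type*} (G : SimpleGraph V) (α β : Sym2 V)
    (K : (G.deleteEdges {α, β}).Subgraph) (a u b w : V) : Prop :=
  ∃ (m : ℕ) (hm : 3 ≤ m) (φ : ladderGraph m ≃g K.coe),
    (φ ((0 : Fin 2), (⟨0, by omega⟩ : Fin m))).val = a ∧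
    (φ ((1 : Fin 2), (⟨0, by omega⟩ : Fin m))).val = u ∧
    (if m % 2 = 1 then
        (φ ((0 : Fin 2), (⟨m - 1, by omega⟩ : Fin m))).val = w ∧
        (φ ((1 : Fin 2), (⟨m - 1, by omega⟩ : Fin m))).val = b
      else
        (φ ((1 : Fin 2), (⟨m - 1, by omega⟩ : Fin m))).val = w ∧
        (φ ((0 : Fin 2), (⟨m - 1, by omega⟩ : Fin m))).val = b) ∧
    (∀ v ∈ K.verts, v ≠ u → v ≠ w → degOf G v = 3) ∧
    a ∈ VR α β ∧ b ∈ VR α β ∧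
    (∀ i : Fin m, 0 < i.val → i.val < m - 1 →
      RThin G α β s((φ ((0 : Fin 2), i)).val, (φ ((1 : Fin 2), i)).val) ∧
      barrierIndex
        (G.deleteEdges {s((φ ((0 : Fin 2), i)).val, (φ ((1 : Fin 2), i)).val)}) = 2)

/-- An `R`-biwheel configuration: a subgraph `K` of `H := G − R` which is a
partial biwheel with external spokes `au` and `bw` (hubs `u`, `w`) such that
the hubs are not cubic in `G`, every other vertex of `K` is cubic in `G`, the
ends `a` and `b` lie in `V(R)`, and every internal spoke is an `R`-thin edge
of `G` whose index is one. -/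
def RBiwheelConfig {V : Type*} (G : SimpleGraph V) (α β : Sym2 V)
    (K : (G.deleteEdges {α, β}).Subgraph) (a u b w : V) : Prop :=
  ∃ (k : ℕ) (hk : 2 ≤ k) (φ : biwheelGraph k ≃g K.coe),
    (φ (Sum.inl (⟨0, by omega⟩ : Fin (2 * k)))).val = a ∧
    (φ (Sum.inl (⟨2 * k - 1, by omega⟩ : Fin (2 * k)))).val = b ∧
    (φ (Sum.inr 0)).val = u ∧
    (φ (Sum.inr 1)).val = w ∧
    degOf G u ≠ 3 ∧ degOf G w ≠ 3 ∧
    (∀ v ∈ K.verts, v ≠ u → v ≠ w → degOf G v = 3) ∧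
    a ∈ VR α β ∧ b ∈ VR α β ∧
    (∀ e ∈ K.edgeSet, (u ∈ e ∨ w ∈ e) → e ≠ s(a, u) → e ≠ s(b, w) →
      RThin G α β e ∧ barrierIndex (G.deleteEdges {e}) = 1)

/-- An `R`-configuration: an `R`-ladder or an `R`-biwheel, with free corners
`u` and `w`. -/
def RConfig {V : Type*} (G : SimpleGraph V) (α β : Sym2 V)
    (K : (G.deleteEdges {α, β}).Subgraph) (a u b w : V) : Prop :=
  RLadderConfig G α β K a u b w ∨ RBiwheelConfig G α β K a u b w

/-- A 4-cycle on the four (distinct) vertices `v0 v1 v2 v3`. -/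
def Is4Cycle {V : Type*} (H : SimpleGraph V) (v0 v1 v2 v3 : V) : Prop :=
  v0 ≠ v1 ∧ v0 ≠ v2 ∧ v0 ≠ v3 ∧ v1 ≠ v2 ∧ v1 ≠ v3 ∧ v2 ≠ v3 ∧
  H.Adj v0 v1 ∧ H.Adj v1 v2 ∧ H.Adj v2 v3 ∧ H.Adj v3 v0

/-- The cut `∂(X)`. -/
def edgeCutOf {V : Type*} (G : SimpleGraph V) (X : Set V) : Set (Sym2 V) :=
  {e | e ∈ G.edgeSet ∧ ∃ p q : V, e = s(p, q) ∧ p ∈ X ∧ q ∉ X}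

/-- The cut `∂(X)` is tight: every perfect matching contains exactly one of
its edges. -/
def TightCut {V : Type*} (G : SimpleGraph V) (X : Set V) : Prop :=
  ∀ M : G.Subgraph, M.IsPerfectMatching → (M.edgeSet ∩ edgeCutOf G X).ncard = 1

/-- A brace: a bipartite matching covered graph with no nontrivial tight cut. -/
def IsBrace {V : Type*} (G : SimpleGraph V) : Prop :=
  BipartiteGraph G ∧ MatchingCovered G ∧
    ¬ ∃ X : Set V, 2 ≤ X.ncard ∧ 2 ≤ Xᶜ.ncard ∧ TightCut G X

/-!
Fix the bipartition `A ∪ B` with `b ∈ A` and write the 4-cycle as `b x c y`. In a bipartite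
matching covered graph every nonempty proper `S ⊂ A` satisfies `|N(S)| > |S|`. If `bx` is not
removable, Hall's theorem applied to `H - bx` produces `S ⊆ A` with `b ∈ S`,
`|N(S)| = |S| + 1`, and `b` the only neighbour of `x` in `S`; likewise `T` for `by`. As `c` lies
in neither set, submodularity of `|N(·)|` gives `|N(S ∩ T)| ≤ |S ∩ T| + 1`. Removing `b` from
`S ∩ T` loses the two neighbours `x` and `y`, contradicting `|N(S ∩ T - b)| > |S ∩ T - b|`,
unless `S ∩ T = {b}`, where the bound says `deg b ≤ 2`.
-/

open Set Function

namespace SimpleGraph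

variable {V : Type*} {G G' : SimpleGraph V} {S T : Set V} {b x : V}

def nbhd (G : SimpleGraph V) (S : Set V) : Set V := {y | ∃ a ∈ S, G.Adj a y}

@[simp] lemma mem_nbhd {y : V} : y ∈ G.nbhd S ↔ ∃ a ∈ S, G.Adj a y := Iff.rfl

lemma nbhd_mono (h : S ⊆ T) : G.nbhd S ⊆ G.nbhd T :=
  fun _ ⟨a, ha, hay⟩ ↦ ⟨a, h ha, hay⟩

lemma nbhd_mono_left (h : G' ≤ G) : G'.nbhd S ⊆ G.nbhd S :=
  fun _ ⟨a, ha, hay⟩ ↦ ⟨a, ha, h hay⟩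

lemma nbhd_union : G.nbhd (S ∪ T) = G.nbhd S ∪ G.nbhd T := by
  ext y; simp only [mem_nbhd, mem_union, or_and_right, exists_or]

lemma nbhd_inter_subset : G.nbhd (S ∩ T) ⊆ G.nbhd S ∩ G.nbhd T :=
  subset_inter (nbhd_mono inter_subset_left) (nbhd_mono inter_subset_right)

lemma nbhd_singleton : G.nbhd {b} = G.neighborSet b := by
  ext y; simp

lemma nbhd_subset_insert_nbhd_deleteEdges (hx : x ∉ S) :
    G.nbhd S ⊆ insert x ((G.deleteEdges {s(b, x)}).nbhd S) := by
  rintro y ⟨a, ha, hay⟩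
  by_cases he : s(a, y) = s(b, x)
  · rcases Sym2.eq_iff.mp he with ⟨-, rfl⟩ | ⟨rfl, -⟩
    exacts [mem_insert _ _, (hx ha).elim]
  · exact mem_insert_of_mem _ ⟨a, ha, (deleteEdges_adj ..).mpr ⟨hay, he⟩⟩

lemma nbhd_deleteEdges_of_notMem (hb : b ∉ S) (hx : x ∉ S) :
    (G.deleteEdges {s(b, x)}).nbhd S = G.nbhd S := by
  refine (nbhd_mono_left (deleteEdges_le _)).antisymm fun y ⟨a, ha, hay⟩ ↦
    ⟨a, ha, (deleteEdges_adj ..).mpr ⟨hay, ?_⟩⟩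
  rw [mem_singleton_iff, Sym2.eq_iff]
  rintro (⟨rfl, -⟩ | ⟨rfl, -⟩)
  exacts [hb ha, hx ha]

lemma Subgraph.IsPerfectMatching.exists_injective_adj {M : G.Subgraph}
    (hM : M.IsPerfectMatching) : ∃ P : V → V, Injective P ∧ ∀ v, M.Adj v (P v) := by
  choose P hP using fun v ↦ (Subgraph.isPerfectMatching_iff.mp hM v).exists
  exact ⟨P, fun v w h ↦ hM.1.eq_of_adj_right (hP v) (h ▸ hP w), hP⟩

end SimpleGraph

open SimpleGraph

lemma MatchingCovered.exists_isPerfectMatching {V : Type*} [Finite V] {G : SimpleGraph V}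
    (hG : MatchingCovered G) : ∃ M : G.Subgraph, M.IsPerfectMatching := by
  have : Nontrivial V := Finite.one_lt_card_iff_nontrivial.mp hG.1
  obtain ⟨v, w, hvw⟩ : ∃ v w, G.Adj v w :=
    ⟨Classical.arbitrary V, hG.2.1.preconnected.exists_adj_of_nontrivial _⟩
  obtain ⟨M, hM, -⟩ := hG.2.2 s(v, w) hvw
  exact ⟨M, hM⟩

namespace BipartitionOf

variable {V : Type*} {G G' : SimpleGraph V} {A B S T : Set V}

lemma symm (h : BipartitionOf G A B) : BipartitionOf G B A :=
  ⟨union_comm A B ▸ h.1, h.2.1.symm, fun _ _ huv ↦ (h.2.2 huv.symm).symm⟩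

lemma mono (h : BipartitionOf G A B) (hle : G' ≤ G) : BipartitionOf G' A B :=
  ⟨h.1, h.2.1, fun _ _ huv ↦ h.2.2 (hle huv)⟩

lemma mem_or_mem (h : BipartitionOf G A B) (v : V) : v ∈ A ∨ v ∈ B :=
  eq_univ_iff_forall.mp h.1 v

lemma notMem_right_of_mem_left (h : BipartitionOf G A B) {v : V} (hv : v ∈ A) : v ∉ B :=
  h.2.1.notMem_of_mem_left hv

lemma mem_right_of_adj (h : BipartitionOf G A B) {a y : V} (ha : a ∈ A) (hay : G.Adj a y) :
    y ∈ B :=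
  (h.2.2 hay).mp ha

lemma nbhd_subset_right (h : BipartitionOf G A B) (hS : S ⊆ A) : G.nbhd S ⊆ B :=
  fun _ ⟨_, ha, hay⟩ ↦ h.mem_right_of_adj (hS ha) hay

lemma ncard_le_ncard_of_isPerfectMatching [Finite V] (h : BipartitionOf G A B)
    {M : G.Subgraph} (hM : M.IsPerfectMatching) : A.ncard ≤ B.ncard := by
  obtain ⟨P, hPinj, hP⟩ := hM.exists_injective_adj
  exact ncard_le_ncard_of_injOn P (fun a ha ↦ h.mem_right_of_adj ha (M.adj_sub (hP a)))
    hPinj.injOn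

lemma ncard_eq_of_isPerfectMatching [Finite V] (h : BipartitionOf G A B)
    {M : G.Subgraph} (hM : M.IsPerfectMatching) : A.ncard = B.ncard :=
  (h.ncard_le_ncard_of_isPerfectMatching hM).antisymm
    (h.symm.ncard_le_ncard_of_isPerfectMatching hM)

lemma exists_isPerfectMatching_of_injOn [Finite V] (h : BipartitionOf G A B)
    (hcard : A.ncard = B.ncard) {f : V → V} (hf : InjOn f A) (hadj : ∀ a ∈ A, G.Adj a (f a)) :
    ∃ M : G.Subgraph, M.IsPerfectMatching ∧ ∀ a ∈ A, M.Adj a (f a) := by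
  have himage : f '' A = B := eq_of_subset_of_ncard_le
    (image_subset_iff.mpr fun a ha ↦ h.mem_right_of_adj ha (hadj a ha))
    (by rw [hf.ncard_image, hcard])
  let M : G.Subgraph :=
    { verts := univ
      Adj := fun p q ↦ (p ∈ A ∧ f p = q) ∨ (q ∈ A ∧ f q = p)
      adj_sub := by
        rintro p q (⟨hp, rfl⟩ | ⟨hq, rfl⟩)
        exacts [hadj p hp, (hadj q hq).symm]
      edge_vert := fun _ ↦ mem_univ _
      symm := ⟨fun _ _ ↦ Or.symm⟩ }
  refine ⟨M, Subgraph.isPerfectMatching_iff.mpr fun p ↦ ?_, fun a ha ↦ Or.inl ⟨ha, rfl⟩⟩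
  rcases h.mem_or_mem p with hp | hp
  · refine ⟨f p, Or.inl ⟨hp, rfl⟩, ?_⟩
    rintro q (⟨-, rfl⟩ | ⟨hq, rfl⟩)
    exacts [rfl, (h.notMem_right_of_mem_left hp (h.mem_right_of_adj hq (hadj q hq))).elim]
  · obtain ⟨a, ha, rfl⟩ := himage.symm ▸ hp
    refine ⟨a, Or.inr ⟨ha, rfl⟩, ?_⟩
    rintro q (⟨hfa, -⟩ | ⟨hq, hfq⟩)
    exacts [(h.notMem_right_of_mem_left hfa hp).elim, hf hq ha hfq]

lemma exists_ncard_nbhd_sdiff_lt [Fintype V] (h : BipartitionOf G A B)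
    (hcard : A.ncard = B.ncard) {u v : V} (hu : u ∈ A) (huv : G.Adj u v)
    (hno : ∀ M : G.Subgraph, M.IsPerfectMatching → ¬ M.Adj u v) :
    ∃ S ⊆ A \ {u}, (G.nbhd S \ {v}).ncard < S.ncard := by
  classical
  by_contra! hHall
  obtain ⟨g, hginj, hg⟩ := (Fintype.all_card_le_filter_rel_iff_exists_injective
      fun (a : ↥(A \ {u})) y ↦ G.Adj a y ∧ y ≠ v).mp fun s ↦ calc
    s.card = (Subtype.val '' (s : Set ↥(A \ {u}))).ncard := by
      rw [Subtype.val_injective.injOn.ncard_image, ncard_coe_finset]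
    _ ≤ _ := hHall _ (by rintro _ ⟨a, -, rfl⟩; exact a.2)
    _ = _ := by
      rw [← ncard_coe_finset]; congr 1; ext y; simp [← and_assoc, exists_and_right]
  let f : V → V := fun a ↦ if ha : a ∈ A \ {u} then g ⟨a, ha⟩ else v
  have hfu : f u = v := dif_neg fun h ↦ h.2 rfl
  have hf_of_mem (a : V) (ha : a ∈ A \ {u}) : f a = g ⟨a, ha⟩ := dif_pos ha
  have hf : InjOn f A := by
    intro a ha a' ha' hfa
    rcases eq_or_ne a u with hau | hau <;> rcases eq_or_ne a' u with hau' | hau'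
    · exact hau.trans hau'.symm
    · rw [hau, hfu, hf_of_mem a' ⟨ha', hau'⟩] at hfa
      exact ((hg _).2 hfa.symm).elim
    · rw [hau', hfu, hf_of_mem a ⟨ha, hau⟩] at hfa
      exact ((hg _).2 hfa).elim
    · rw [hf_of_mem a ⟨ha, hau⟩, hf_of_mem a' ⟨ha', hau'⟩] at hfa
      exact congrArg Subtype.val (hginj hfa)
  have hadj : ∀ a ∈ A, G.Adj a (f a) := by
    intro a ha
    rcases eq_or_ne a u with rfl | hau
    · exact hfu ▸ huv
    · rw [hf_of_mem a ⟨ha, hau⟩]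
      exact (hg ⟨a, ha, hau⟩).1
  obtain ⟨M, hM, hMf⟩ := h.exists_isPerfectMatching_of_injOn hcard hf hadj
  exact hno M hM (hfu ▸ hMf u hu)

lemma ncard_lt_ncard_nbhd [Finite V] (h : BipartitionOf G A B) (hG : MatchingCovered G)
    (hSA : S ⊆ A) (hS : S.Nonempty) (hne : S ≠ A) : S.ncard < (G.nbhd S).ncard := by
  obtain ⟨a, haA, haS⟩ := exists_of_ssubset (hSA.ssubset_of_ne hne)
  obtain ⟨s₀, hs₀⟩ := hS
  have haX : a ∉ S ∪ G.nbhd S :=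
    fun ha ↦ ha.elim haS fun ha ↦ h.notMem_right_of_mem_left haA (h.nbhd_subset_right hSA ha)
  obtain ⟨w⟩ := hG.2.1.preconnected s₀ a
  obtain ⟨d, -, hdX, hdX'⟩ := w.exists_boundary_dart _ (Or.inl hs₀) haX
  have hp : d.fst ∈ G.nbhd S := hdX.resolve_left fun hp ↦ hdX' (Or.inr ⟨_, hp, d.adj⟩)
  obtain ⟨M, hM, hdM⟩ := hG.2.2 _ d.edge_mem
  obtain ⟨P, hPinj, hP⟩ := hM.exists_injective_adj
  -- `d.fst` is matched to `d.snd ∉ S`, so no vertex of `S` is matched to `d.fst`.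
  have hmaps : ∀ s ∈ S, P s ∈ G.nbhd S \ {d.fst} := by
    refine fun s hs ↦ ⟨⟨s, hs, M.adj_sub (hP s)⟩, fun hPs ↦ hdX' (Or.inl ?_)⟩
    rw [hM.1.eq_of_adj_right (Subgraph.mem_edgeSet.mp hdM).symm (hPs ▸ hP s)]
    exact hs
  calc S.ncard ≤ (G.nbhd S \ {d.fst}).ncard := ncard_le_ncard_of_injOn P hmaps hPinj.injOn
    _ < (G.nbhd S).ncard := ncard_sdiff_singleton_lt_of_mem hp

lemma exists_adj_forall_not_adj_of_not_matchingCovered (h : BipartitionOf G A B)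
    (hcard : 2 ≤ Nat.card V) (hconn : G.Connected) (hG : ¬ MatchingCovered G) :
    ∃ u ∈ A, ∃ v, G.Adj u v ∧ ∀ M : G.Subgraph, M.IsPerfectMatching → ¬ M.Adj u v := by
  simp only [MatchingCovered, hcard, hconn, true_and, not_forall, not_exists, not_and] at hG
  obtain ⟨⟨p, q⟩, he, hno⟩ := hG
  rcases h.mem_or_mem p with hp | hp
  · exact ⟨p, hp, q, he, fun M hM hpq ↦ hno M hM (Subgraph.mem_edgeSet.mpr hpq)⟩
  · refine ⟨q, h.symm.mem_right_of_adj hp he, p, G.adj_symm he, fun M hM hqp ↦ ?_⟩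
    exact hno M hM (Subgraph.mem_edgeSet.mpr hqp.symm)

lemma exists_ncard_nbhd_eq_succ_of_not_removableEdge [Fintype V] (h : BipartitionOf G A B)
    (hG : MatchingCovered G) {b x : V} (hb : b ∈ A) (hbx : G.Adj b x)
    (hconn : (G.deleteEdges {s(b, x)}).Connected) (hnr : ¬ RemovableEdge G s(b, x)) :
    ∃ S ⊆ A, b ∈ S ∧ (∀ a ∈ S, G.Adj a x → a = b) ∧
      (G.nbhd S).ncard = S.ncard + 1 := by
  set G' := G.deleteEdges {s(b, x)}
  have h' : BipartitionOf G' A B := h.mono (deleteEdges_le _)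
  obtain ⟨M, hM⟩ := hG.exists_isPerfectMatching
  obtain ⟨u, hu, v, huv, hno⟩ :=
    h'.exists_adj_forall_not_adj_of_not_matchingCovered hG.1 hconn fun hG' ↦ hnr ⟨hbx, hG'⟩
  obtain ⟨S, hS, hSlt⟩ :=
    h'.exists_ncard_nbhd_sdiff_lt (h.ncard_eq_of_isPerfectMatching hM) hu huv hno
  have hSA : S ⊆ A := hS.trans sdiff_subset
  have hxS : x ∉ S := fun hx ↦ h.notMem_right_of_mem_left (hSA hx) (h.mem_right_of_adj hb hbx)
  have hG'S : (G'.nbhd S).ncard ≤ S.ncard := by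
    have := pred_ncard_le_ncard_sdiff_singleton (G'.nbhd S) v
    omega
  have hGS : S.ncard < (G.nbhd S).ncard :=
    h.ncard_lt_ncard_nbhd hG hSA (nonempty_of_ncard_ne_zero (by omega))
      fun hSA' ↦ (hS (hSA' ▸ hu)).2 rfl
  have hsub : G.nbhd S ⊆ insert x (G'.nbhd S) := nbhd_subset_insert_nbhd_deleteEdges hxS
  have hins := (ncard_le_ncard hsub).trans (ncard_insert_le _ _)
  have hbS : b ∈ S := by
    by_contra hbS
    rw [nbhd_deleteEdges_of_notMem hbS hxS] at hG'S
    omega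
  refine ⟨S, hSA, hbS, fun a ha hax ↦ ?_, by omega⟩
  by_contra hab
  have hx : x ∈ G'.nbhd S :=
    ⟨a, ha, (deleteEdges_adj ..).mpr ⟨hax, by simp [hab, hax.ne]⟩⟩
  have := ncard_le_ncard (hsub.trans (insert_subset hx subset_rfl))
  omega

lemma ncard_nbhd_inter_le [Finite V] (h : BipartitionOf G A B) (hG : MatchingCovered G)
    (hSA : S ⊆ A) (hTA : T ⊆ A) (hST : (S ∪ T).Nonempty) (hSTA : S ∪ T ≠ A)
    (hNS : (G.nbhd S).ncard = S.ncard + 1) (hNT : (G.nbhd T).ncard = T.ncard + 1) :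
    (G.nbhd (S ∩ T)).ncard ≤ (S ∩ T).ncard + 1 := by
  have hU := h.ncard_lt_ncard_nbhd hG (union_subset hSA hTA) hST hSTA
  rw [nbhd_union] at hU
  have := ncard_union_add_ncard_inter S T
  have := ncard_union_add_ncard_inter (G.nbhd S) (G.nbhd T)
  have := ncard_le_ncard (nbhd_inter_subset (G := G) (S := S) (T := T))
  omega

end BipartitionOf

lemma BipartiteGraph.exists_bipartitionOf_mem {V : Type*} {G : SimpleGraph V}
    (h : BipartiteGraph G) (v : V) : ∃ A B, BipartitionOf G A B ∧ v ∈ A := by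
  obtain ⟨A, B, hAB⟩ := h
  rcases hAB.mem_or_mem v with hv | hv
  exacts [⟨A, B, hAB, hv⟩, ⟨B, A, hAB.symm, hv⟩]

section FourCycle

variable {V : Type*} {G : SimpleGraph V}

lemma Is4Cycle.rotate {v0 v1 v2 v3 : V}
    (h : Is4Cycle G v0 v1 v2 v3) : Is4Cycle G v1 v2 v3 v0 := by
  obtain ⟨h01, h02, h03, h12, h13, h23, a01, a12, a23, a30⟩ := h
  exact ⟨h12, h13, h01.symm, h23, h02.symm, h03.symm, a12, a23, a30, a01⟩

lemma Is4Cycle.reverse {v0 v1 v2 v3 : V}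
    (h : Is4Cycle G v0 v1 v2 v3) : Is4Cycle G v0 v3 v2 v1 := by
  obtain ⟨h01, h02, h03, h12, h13, h23, a01, a12, a23, a30⟩ := h
  exact ⟨h03, h02, h01, h23.symm, h13.symm, h12.symm, a30.symm, a23.symm, a12.symm, a01.symm⟩

lemma Is4Cycle.connected_deleteEdges {v0 v1 v2 v3 : V}
    (h : Is4Cycle G v0 v1 v2 v3) (hG : G.Connected) :
    (G.deleteEdges {s(v0, v1)}).Connected := by
  obtain ⟨h01, h02, h03, h12, h13, h23, -, a12, a23, a30⟩ := h
  refine hG.connected_delete_edge_of_not_isBridge fun hbr ↦ isBridge_iff.mp hbr ?_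
  have adj {p q : V} (hpq : G.Adj p q) (hne : s(p, q) ≠ s(v0, v1)) :
      (G.deleteEdges {s(v0, v1)}).Reachable p q :=
    ((deleteEdges_adj ..).mpr ⟨hpq, hne⟩).reachable
  refine ((adj a30.symm ?_).trans (adj a23.symm ?_)).trans (adj a12.symm ?_) <;>
    simp [h01.symm, h02.symm, h03.symm, h12.symm, h13.symm]

lemma fourCycle_edges_rotate (v0 v1 v2 v3 : V) :
    ({s(v1, v2), s(v2, v3), s(v3, v0), s(v0, v1)} : Set (Sym2 V)) =
      {s(v0, v1), s(v1, v2), s(v2, v3), s(v3, v0)} := by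
  ext; simp only [mem_insert_iff, mem_singleton_iff]; tauto

lemma Is4Cycle.exists_rotation {v0 v1 v2 v3 b : V} {e : Sym2 V} (hQ : Is4Cycle G v0 v1 v2 v3)
    (hbe : b ∈ e) (he : e ∈ ({s(v0, v1), s(v1, v2), s(v2, v3), s(v3, v0)} : Set (Sym2 V))) :
    ∃ x c y, Is4Cycle G b x c y ∧ ({s(b, x), s(x, c), s(c, y), s(y, b)} : Set (Sym2 V)) =
      {s(v0, v1), s(v1, v2), s(v2, v3), s(v3, v0)} := by
  have hb : b = v0 ∨ b = v1 ∨ b = v2 ∨ b = v3 := by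
    simp only [mem_insert_iff, mem_singleton_iff] at he
    rcases he with rfl | rfl | rfl | rfl <;> rw [Sym2.mem_iff] at hbe <;> tauto
  rcases hb with rfl | rfl | rfl | rfl
  · exact ⟨v1, v2, v3, hQ, rfl⟩
  · exact ⟨v2, v3, v0, hQ.rotate, fourCycle_edges_rotate ..⟩
  · exact ⟨v3, v0, v1, hQ.rotate.rotate,
      (fourCycle_edges_rotate ..).trans (fourCycle_edges_rotate ..)⟩
  · exact ⟨v0, v1, v2, hQ.rotate.rotate.rotate, (fourCycle_edges_rotate ..).trans
      ((fourCycle_edges_rotate ..).trans (fourCycle_edges_rotate ..))⟩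

lemma Is4Cycle.eq_or_eq_of_mem {b x c y : V} {e : Sym2 V} (hQ : Is4Cycle G b x c y)
    (hbe : b ∈ e) (he : e ∈ ({s(b, x), s(x, c), s(c, y), s(y, b)} : Set (Sym2 V))) :
    e = s(b, x) ∨ e = s(b, y) := by
  obtain ⟨hbx, hbc, hby, -, -, -⟩ := hQ
  simp only [mem_insert_iff, mem_singleton_iff] at he
  rcases he with rfl | rfl | rfl | rfl <;> simp only [Sym2.mem_iff] at hbe
  · exact Or.inl rfl
  · rcases hbe with rfl | rfl <;> simp_all
  · rcases hbe with rfl | rfl <;> simp_all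
  · exact Or.inr Sym2.eq_swap

end FourCycle

theorem removableEdge_or_removableEdge_of_is4Cycle {V : Type*} [Fintype V] {G : SimpleGraph V}
    (hG : MatchingCovered G) (hbip : BipartiteGraph G) {b x c y : V} (hdeg : 3 ≤ degOf G b)
    (hQ : Is4Cycle G b x c y) : RemovableEdge G s(b, x) ∨ RemovableEdge G s(b, y) := by
  by_contra! hnr
  obtain ⟨A, B, h, hbA⟩ := hbip.exists_bipartitionOf_mem b
  have hconn_x := hQ.connected_deleteEdges hG.2.1
  have hconn_y := hQ.reverse.connected_deleteEdges hG.2.1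
  obtain ⟨-, hbc, -, -, hxy, -, hbx, hxc, hcy, hyb⟩ := hQ
  have hcA : c ∈ A := h.symm.mem_right_of_adj (h.mem_right_of_adj hbA hbx) hxc
  obtain ⟨S, hSA, hbS, hxS, hNS⟩ :=
    h.exists_ncard_nbhd_eq_succ_of_not_removableEdge hG hbA hbx hconn_x hnr.1
  obtain ⟨T, hTA, hbT, hyT, hNT⟩ :=
    h.exists_ncard_nbhd_eq_succ_of_not_removableEdge hG hbA hyb.symm hconn_y hnr.2
  have hcST : c ∉ S ∪ T := by
    rintro (hc | hc)
    exacts [hbc (hxS c hc hxc.symm).symm, hbc (hyT c hc hcy).symm]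
  have hW := h.ncard_nbhd_inter_le hG hSA hTA ⟨b, Or.inl hbS⟩ (fun hST ↦ hcST (hST ▸ hcA))
    hNS hNT
  have hbW : b ∈ S ∩ T := ⟨hbS, hbT⟩
  obtain hW' | hW' := ((S ∩ T) \ {b}).eq_empty_or_nonempty
  · rw [(sdiff_eq_empty.mp hW').antisymm (singleton_subset_iff.mpr hbW), nbhd_singleton,
      ncard_singleton] at hW
    exact absurd hdeg (by unfold degOf; omega)
  · have hlt := h.ncard_lt_ncard_nbhd hG (sdiff_subset.trans (inter_subset_left.trans hSA))
      hW' fun hA ↦ (hA ▸ hbA).2 rfl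
    have hsub : G.nbhd ((S ∩ T) \ {b}) ⊆ G.nbhd (S ∩ T) \ {x, y} := by
      rintro z ⟨a, ⟨⟨haS, haT⟩, hab⟩, haz⟩
      refine ⟨⟨a, ⟨haS, haT⟩, haz⟩, ?_⟩
      rintro (rfl | rfl)
      exacts [hab (hxS a haS haz), hab (hyT a haT haz)]
    have hpair : {x, y} ⊆ G.nbhd (S ∩ T) := pair_subset ⟨b, hbW, hbx⟩ ⟨b, hbW, hyb.symm⟩
    have := ncard_le_ncard hsub
    rw [ncard_sdiff hpair, ncard_pair hxy] at this
    rw [ncard_sdiff_singleton_of_mem hbW] at hlt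
    omega

theorem stmt9_general {V : Type*} [Fintype V] (H : SimpleGraph V)
    (hMC : MatchingCovered H) (hbip : BipartiteGraph H)
    (b : V) (hdeg : 3 ≤ degOf H b)
    (e f : Sym2 V) (hef : e ≠ f) (hbe : b ∈ e) (hbf : b ∈ f)
    (v0 v1 v2 v3 : V) (hQ : Is4Cycle H v0 v1 v2 v3)
    (heQ : e ∈ ({s(v0, v1), s(v1, v2), s(v2, v3), s(v3, v0)} : Set (Sym2 V)))
    (hfQ : f ∈ ({s(v0, v1), s(v1, v2), s(v2, v3), s(v3, v0)} : Set (Sym2 V))) :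
    RemovableEdge H e ∨ RemovableEdge H f := by
  obtain ⟨x, c, y, hQ', hedges⟩ := hQ.exists_rotation hbe heQ
  rw [← hedges] at heQ hfQ
  have key := removableEdge_or_removableEdge_of_is4Cycle hMC hbip hdeg hQ'
  rcases hQ'.eq_or_eq_of_mem hbe heQ with rfl | rfl <;>
    rcases hQ'.eq_or_eq_of_mem hbf hfQ with rfl | rfl
  exacts [absurd rfl hef, key, key.symm, absurd rfl hef]

/-- of two distinct edges at a vertex of degree at least three
lying in a common 4-cycle, at least one is removable. -/
theorem stmt9 {V : Type*} [Fintype V] (H : SimpleGraph V)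
    (hMC : MatchingCovered H) (hbip : BipartiteGraph H)
    (b : V) (hdeg : 3 ≤ degOf H b)
    (e f : Sym2 V) (hef : e ≠ f) (hbe : b ∈ e) (hbf : b ∈ f)
    (he : e ∈ H.edgeSet) (hf : f ∈ H.edgeSet)
    (v0 v1 v2 v3 : V) (hQ : Is4Cycle H v0 v1 v2 v3)
    (heQ : e ∈ ({s(v0, v1), s(v1, v2), s(v2, v3), s(v3, v0)} : Set (Sym2 V)))
    (hfQ : f ∈ ({s(v0, v1), s(v1, v2), s(v2, v3), s(v3, v0)} : Set (Sym2 V))) :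
    RemovableEdge H e ∨ RemovableEdge H f :=
  stmt9_general H hMC hbip b hdeg e f hef hbe hbf v0 v1 v2 v3 hQ heQ hfQ
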